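/- Let a ∈ ℝ, let g : (a,∞) → [0,∞) be a continuous log-convex function, and let ν be a Borel measure on [0,∞). Suppose h(x) := ∫_{[0,∞)} g(x+y) dν(y) is finite for every x > a. Then h is continuous and log-convex on (a,∞). -/

import Mathlib

/-!
A continuous `g ≥ 0` satisfying `g (x + y) ^ 2 ≤ g x * g (x + 2 * y)` for `0 < y < 1` attains its
maximum over an interval of length `< 2` at an endpoint: reflecting an interior maximiser `t₀`
about the nearer endpoint `e` gives `g t₀ ^ 2 ≤ g e * g t₀`. Hence on `[x₀ - δ, x₀ + δ]` the
translates `g (x + z)` are dominated by `g (x₀ - δ + z) + g (x₀ + δ + z)`, and dominated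
convergence gives continuity of the integral. Log-convexity of the integral follows by integrating
`g (x + y + z) ≤ √(g (x + z)) * √(g (x + 2 * y + z))` and applying Cauchy–Schwarz.
-/

open MeasureTheory Set

section CauchySchwarz

variable {α : Type*} [MeasurableSpace α] {μ : Measure α}

theorem MeasureTheory.Integrable.memLp_two_sqrt {g : α → ℝ} (hg : Integrable g μ)
    (hg0 : 0 ≤ᵐ[μ] g) :
    MemLp (fun x => √(g x)) 2 μ := by
  refine (memLp_two_iff_integrable_sq
    (Real.continuous_sqrt.comp_aestronglyMeasurable hg.aestronglyMeasurable)).2 (hg.congr ?_)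
  filter_upwards [hg0] with x hx using (Real.sq_sqrt hx).symm

theorem integral_sqrt_sq {g : α → ℝ} (hg0 : 0 ≤ᵐ[μ] g) :
    ∫ x, √(g x) ^ (2 : ℝ) ∂μ = ∫ x, g x ∂μ := by
  refine integral_congr_ae ?_
  filter_upwards [hg0] with x hx
  rw [Real.rpow_two, Real.sq_sqrt hx]

theorem sq_integral_le_integral_mul_integral_of_sq_le_mul {f g h : α → ℝ}
    (hg : Integrable g μ) (hh : Integrable h μ) (hg0 : 0 ≤ᵐ[μ] g) (hh0 : 0 ≤ᵐ[μ] h)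
    (hfgh : ∀ᵐ x ∂μ, f x ^ 2 ≤ g x * h x) :
    (∫ x, f x ∂μ) ^ 2 ≤ (∫ x, g x ∂μ) * ∫ x, h x ∂μ := by
  have hA := integral_nonneg_of_ae hg0
  have hB := integral_nonneg_of_ae hh0
  by_cases hf : Integrable f μ
  swap
  · rw [integral_undef hf, sq, zero_mul]
    exact mul_nonneg hA hB
  have hg2 := hg.memLp_two_sqrt hg0
  have hh2 := hh.memLp_two_sqrt hh0
  have hf_le : ∀ᵐ x ∂μ, |f x| ≤ √(g x) * √(h x) := by
    filter_upwards [hfgh, hg0] with x hx hgx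
    rw [← Real.sqrt_mul hgx]
    exact Real.abs_le_sqrt hx
  have holder := integral_mul_le_Lp_mul_Lq_of_nonneg Real.HolderConjugate.two_two
    (ae_of_all _ fun x => Real.sqrt_nonneg (g x)) (ae_of_all _ fun x => Real.sqrt_nonneg (h x))
    (by simpa using hg2) (by simpa using hh2)
  rw [integral_sqrt_sq hg0, integral_sqrt_sq hh0, ← Real.sqrt_eq_rpow,
    ← Real.sqrt_eq_rpow] at holder
  have habs : |∫ x, f x ∂μ| ≤ √(∫ x, g x ∂μ) * √(∫ x, h x ∂μ) :=
    calc |∫ x, f x ∂μ| ≤ ∫ x, |f x| ∂μ := abs_integral_le_integral_abs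
      _ ≤ ∫ x, √(g x) * √(h x) ∂μ := integral_mono_ae hf.abs (hg2.integrable_mul hh2) hf_le
      _ ≤ _ := holder
  calc (∫ x, f x ∂μ) ^ 2 = |∫ x, f x ∂μ| ^ 2 := (sq_abs _).symm
    _ ≤ (√(∫ x, g x ∂μ) * √(∫ x, h x ∂μ)) ^ 2 := pow_le_pow_left₀ (abs_nonneg _) habs 2
    _ = (∫ x, g x ∂μ) * ∫ x, h x ∂μ := by rw [mul_pow, Real.sq_sqrt hA, Real.sq_sqrt hB]

end CauchySchwarz

theorem le_of_sq_le_mul_of_le {a b c : ℝ} (ha : 0 ≤ a) (hb : b ^ 2 ≤ a * c) (hcb : c ≤ b) :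
    b ≤ a := by
  nlinarith

def LogConvexOnIoi (a : ℝ) (g : ℝ → ℝ) : Prop :=
  ∀ x, a < x → ∀ y ∈ Ioo (0 : ℝ) 1, g (x + y) ^ 2 ≤ g x * g (x + 2 * y)

namespace LogConvexOnIoi

variable {a : ℝ} {g : ℝ → ℝ}

theorem le_max_of_mem_Icc (hg : LogConvexOnIoi a g) (hcont : ContinuousOn g (Ioi a))
    (hnn : ∀ x, a < x → 0 ≤ g x) {u v t : ℝ} (hau : a < u) (hvu : v - u < 2)
    (ht : t ∈ Icc u v) : g t ≤ max (g u) (g v) := by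
  obtain ⟨t₀, ⟨hut₀, ht₀v⟩, hmax⟩ := isCompact_Icc.exists_isMaxOn ⟨t, ht⟩
    (hcont.mono fun s hs => hau.trans_le hs.1)
  refine (hmax ht).trans ?_
  rcases hut₀.eq_or_lt with rfl | hut₀
  · exact le_max_left _ _
  rcases ht₀v.eq_or_lt with rfl | ht₀v
  · exact le_max_right _ _
  rcases le_or_gt t₀ ((u + v) / 2) with hmid | hmid
  · have key := hg u hau (t₀ - u) ⟨by linarith, by linarith⟩
    rw [add_sub_cancel, show u + 2 * (t₀ - u) = 2 * t₀ - u by ring] at key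
    exact (le_of_sq_le_mul_of_le (hnn u hau) key (hmax ⟨by linarith, by linarith⟩)).trans
      (le_max_left _ _)
  · have key := hg (2 * t₀ - v) (by linarith) (v - t₀) ⟨by linarith, by linarith⟩
    rw [show 2 * t₀ - v + (v - t₀) = t₀ by ring, show 2 * t₀ - v + 2 * (v - t₀) = v by ring,
      mul_comm] at key
    exact (le_of_sq_le_mul_of_le (hnn v (by linarith)) key (hmax ⟨by linarith, by linarith⟩)).trans
      (le_max_right _ _)

variable {ν : Measure ℝ}

theorem continuousOn_integral_add (hg : LogConvexOnIoi a g) (hcont : ContinuousOn g (Ioi a))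
    (hnn : ∀ x, a < x → 0 ≤ g x)
    (hint : ∀ x, a < x → IntegrableOn (fun y => g (x + y)) (Ici 0) ν) :
    ContinuousOn (fun x => ∫ y in Ici (0 : ℝ), g (x + y) ∂ν) (Ioi a) := by
  intro x₀ (hx₀ : a < x₀)
  obtain ⟨δ, hδ0, hδ1, haδ⟩ : ∃ δ : ℝ, 0 < δ ∧ δ < 1 ∧ a < x₀ - δ :=
    ⟨min (1 / 2) ((x₀ - a) / 2), lt_min (by norm_num) (by linarith),
      (min_le_left _ _).trans_lt (by norm_num),
      by linarith [min_le_right (1 / 2 : ℝ) ((x₀ - a) / 2)]⟩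
  refine (continuousAt_of_dominated
    (bound := fun z => g (x₀ - δ + z) + g (x₀ + δ + z)) ?_ ?_ ?_ ?_).continuousWithinAt
  · filter_upwards [Ioi_mem_nhds hx₀] with x hx using (hint x hx).aestronglyMeasurable
  · filter_upwards [Icc_mem_nhds (by linarith : x₀ - δ < x₀) (by linarith : x₀ < x₀ + δ)]
      with x hx
    filter_upwards [ae_restrict_mem measurableSet_Ici] with z (hz : 0 ≤ z)
    rw [Real.norm_of_nonneg (hnn _ (by linarith [hx.1]))]
    calc g (x + z) ≤ max (g (x₀ - δ + z)) (g (x₀ + δ + z)) :=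
          hg.le_max_of_mem_Icc hcont hnn (by linarith) (by linarith)
            ⟨by linarith [hx.1], by linarith [hx.2]⟩
      _ ≤ _ := max_le_add_of_nonneg (hnn _ (by linarith)) (hnn _ (by linarith))
  · exact (hint _ haδ).add (hint _ (by linarith))
  · filter_upwards [ae_restrict_mem measurableSet_Ici] with z (hz : 0 ≤ z)
    exact (hcont.continuousAt (Ioi_mem_nhds (by linarith))).comp
      (f := fun x => x + z) (continuous_add_const z).continuousAt

theorem integral_add (hg : LogConvexOnIoi a g) (hnn : ∀ x, a < x → 0 ≤ g x)
    (hint : ∀ x, a < x → IntegrableOn (fun y => g (x + y)) (Ici 0) ν) :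
    LogConvexOnIoi a (fun x => ∫ z in Ici (0 : ℝ), g (x + z) ∂ν) := by
  intro x hx y hy
  have translate_pos : ∀ w, a < w → ∀ᵐ z ∂ν.restrict (Ici 0), a < w + z := fun w hw => by
    filter_upwards [ae_restrict_mem measurableSet_Ici] with z (hz : 0 ≤ z)
    linarith
  have hx2y : a < x + 2 * y := by linarith [hy.1]
  refine sq_integral_le_integral_mul_integral_of_sq_le_mul (hint x hx) (hint _ hx2y) ?_ ?_ ?_
  · filter_upwards [translate_pos x hx] with z hz using hnn _ hz
  · filter_upwards [translate_pos _ hx2y] with z hz using hnn _ hz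
  · filter_upwards [translate_pos x hx] with z hz
    have key := hg (x + z) hz y hy
    rwa [add_right_comm x z y, add_right_comm x z (2 * y)] at key

end LogConvexOnIoi

/-- Remark 2.2(ii), additive form: if `g` is continuous and log-convex on
`(a,∞)` and `ν` is a Borel measure on `[0,∞)`, then `h x := ∫_{[0,∞)} g (x + y) dν(y)`,
assumed finite (integrable) for every `x > a`, is continuous and log-convex on `(a,∞)`. -/
theorem integral_translate_logConvex (a : ℝ) (g : ℝ → ℝ) (ν : Measure ℝ)
    (hg_cont : ContinuousOn g (Ioi a))
    (hg_nonneg : ∀ x, a < x → 0 ≤ g x)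
    (hg_lc : ∀ x, a < x → ∀ y ∈ Ioo (0 : ℝ) 1,
      (g (x + y)) ^ 2 ≤ g x * g (x + 2 * y))
    (hint : ∀ x, a < x → IntegrableOn (fun y : ℝ => g (x + y)) (Ici 0) ν) :
    ContinuousOn (fun x : ℝ => ∫ y in Ici (0 : ℝ), g (x + y) ∂ν) (Ioi a) ∧
      ∀ x, a < x → ∀ y ∈ Ioo (0 : ℝ) 1,
        (∫ z in Ici (0 : ℝ), g (x + y + z) ∂ν) ^ 2 ≤
          (∫ z in Ici (0 : ℝ), g (x + z) ∂ν) * ∫ z in Ici (0 : ℝ), g (x + 2 * y + z) ∂ν :=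
  ⟨LogConvexOnIoi.continuousOn_integral_add hg_lc hg_cont hg_nonneg hint,
    LogConvexOnIoi.integral_add hg_lc hg_nonneg hint⟩
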